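/- Fix a primitive vector v ∈ ℤ³. The map a ↦ a × v induces a bijection from the quotient group ℤ³/⟨v⟩ onto the lattice v^⊥ = {x ∈ ℤ³ : x · v = 0}. -/

import Mathlib

def dot3 (a b : Fin 3 → ℤ) : ℤ := a 0 * b 0 + a 1 * b 1 + a 2 * b 2

def cross3 (a b : Fin 3 → ℤ) : Fin 3 → ℤ :=
  ![a 1 * b 2 - a 2 * b 1, a 2 * b 0 - a 0 * b 2, a 0 * b 1 - a 1 * b 0]

def Primitive (v : Fin 3 → ℤ) : Prop := Int.gcd (Int.gcd (v 0) (v 1)) (v 2) = 1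

/-! If `c ⬝ v = 1`, the vector triple product expansion
`(u × v) × c = (u ⬝ c) v - (v ⬝ c) u = (u ⬝ c) v - u` shows that `u × v = 0` forces `u ∈ ℤv`,
and `(c × x) × v = (c ⬝ v) x - (x ⬝ v) c = x` exhibits a preimage of any `x ∈ v^⊥`.
Primitivity of `v` is exactly what provides such a `c`, by Bézout. -/

open Matrix

lemma cross3_eq_crossProduct (a b : Fin 3 → ℤ) : cross3 a b = a ⨯₃ b := rfl

lemma dot3_eq_dotProduct (a b : Fin 3 → ℤ) : dot3 a b = a ⬝ᵥ b :=
  (vec3_dotProduct a b).symm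

lemma Primitive.exists_dotProduct_eq_one {v : Fin 3 → ℤ} (hv : Primitive v) :
    ∃ c : Fin 3 → ℤ, c ⬝ᵥ v = 1 := by
  set g := Int.gcd (v 0) (v 1)
  have h01 : (g : ℤ) = v 0 * Int.gcdA (v 0) (v 1) + v 1 * Int.gcdB (v 0) (v 1) :=
    Int.gcd_eq_gcd_ab _ _
  have h2 : ((Int.gcd g (v 2) : ℕ) : ℤ) = g * Int.gcdA g (v 2) + v 2 * Int.gcdB g (v 2) :=
    Int.gcd_eq_gcd_ab _ _
  rw [hv, Nat.cast_one] at h2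
  refine ⟨![Int.gcdA (v 0) (v 1) * Int.gcdA g (v 2), Int.gcdB (v 0) (v 1) * Int.gcdA g (v 2),
    Int.gcdB g (v 2)], ?_⟩
  rw [vec3_dotProduct]
  simp only [cons_val_zero, cons_val_one, cons_val_two, head_cons, tail_cons]
  linear_combination (-Int.gcdA g (v 2)) * h01 - h2

section CommRing

variable {R : Type*} [CommRing R] {c v : Fin 3 → R}

lemma eq_smul_of_cross_eq_zero (hc : c ⬝ᵥ v = 1) {u : Fin 3 → R} (hu : u ⨯₃ v = 0) :
    u = (u ⬝ᵥ c) • v := by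
  have := cross_cross_eq_smul_sub_smul u v c
  rw [hu, map_zero, LinearMap.zero_apply, dotProduct_comm v, hc, one_smul] at this
  exact (sub_eq_zero.mp this.symm).symm

lemma cross_cross_eq_self_of_dotProduct_eq_zero (hc : c ⬝ᵥ v = 1) {x : Fin 3 → R}
    (hx : x ⬝ᵥ v = 0) : c ⨯₃ x ⨯₃ v = x := by
  rw [cross_cross_eq_smul_sub_smul, hc, hx, one_smul, zero_smul, sub_zero]

end CommRing

/-- For primitive `v`, the map `a ↦ a × v` induces a bijection from `ℤ³/⟨v⟩`
onto `v^⊥`: it lands in `v^⊥`, is injective modulo multiples of `v`, and surjective. -/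
theorem cross_with_primitive_bijection (v : Fin 3 → ℤ) (hv : Primitive v) :
    (∀ a : Fin 3 → ℤ, dot3 (cross3 a v) v = 0) ∧
    (∀ a b : Fin 3 → ℤ, cross3 a v = cross3 b v → ∃ k : ℤ, a - b = k • v) ∧
    (∀ x : Fin 3 → ℤ, dot3 x v = 0 → ∃ a : Fin 3 → ℤ, cross3 a v = x) := by
  obtain ⟨c, hc⟩ := hv.exists_dotProduct_eq_one
  simp only [cross3_eq_crossProduct, dot3_eq_dotProduct]
  refine ⟨fun a => (dotProduct_comm _ _).trans (dot_cross_self a v), fun a b hab => ?_,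
    fun x hx => ⟨c ⨯₃ x, cross_cross_eq_self_of_dotProduct_eq_zero hc hx⟩⟩
  refine ⟨(a - b) ⬝ᵥ c, eq_smul_of_cross_eq_zero hc ?_⟩
  rw [map_sub, LinearMap.sub_apply, hab, sub_self]
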